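/- arXiv:1806.06280 — 6 statements merged into one kernel-verified Lean document; each statement's English description precedes it below -/
import Mathlib

section
/- Let f be a monic polynomial of degree n over ℂ with distinct roots λ₁,…,λₙ. Fix an index i and let z ∈ ℂ with f(z) ≠ 0, and set S₁ = Σ_{j≠i} 1/(z-λⱼ), S₂ = Σ_{j≠i} 1/(z-λⱼ)². If 2[f'(z)]² − f(z)f''(z) − f(z)²(S₂ + S₁²) ≠ 0 and f'(z) ≠ 0, then λᵢ = z − 2 f(z) f'(z) / (2[f'(z)]² − f(z)f''(z) − f(z)²(S₂ + S₁²)). -/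
/-!
Writing `f = ∏ⱼ (X - λⱼ)` and `uⱼ = (z - λⱼ)⁻¹`, logarithmic differentiation gives
`f' = f · ∑ uⱼ` and `f'' = f · ((∑ uⱼ)² - ∑ uⱼ²)` at `z`. Since `S₁` and `S₂` are the same sums
with the `i`-th term removed, the denominator collapses to `2 f² (∑ uⱼ) uᵢ` while the numerator
is `2 f² (∑ uⱼ)`, so the correction term is exactly `uᵢ⁻¹ = z - λᵢ`.
-/

open Finset Polynomial

theorem Finset.sum_mul_sum_erase {ι R : Type*} [DecidableEq ι] [CommRing R] (s : Finset ι)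
    (u : ι → R) :
    ∑ k ∈ s, u k * ∑ m ∈ s.erase k, u m = (∑ k ∈ s, u k) ^ 2 - ∑ k ∈ s, u k ^ 2 := by
  calc ∑ k ∈ s, u k * ∑ m ∈ s.erase k, u m
      = ∑ k ∈ s, (u k * ∑ m ∈ s, u m - u k ^ 2) :=
        sum_congr rfl fun k hk => by rw [sum_erase_eq_sub hk]; ring
    _ = (∑ k ∈ s, u k) ^ 2 - ∑ k ∈ s, u k ^ 2 := by rw [sum_sub_distrib, ← sum_mul, sq]

namespace Polynomial

theorem derivative_prod_X_sub_C {R ι : Type*} [CommRing R] [DecidableEq ι] (s : Finset ι)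
    (a : ι → R) :
    derivative (∏ j ∈ s, (X - C (a j))) = ∑ k ∈ s, ∏ j ∈ s.erase k, (X - C (a j)) := by
  simp only [derivative_prod_finset, derivative_X_sub_C, mul_one]

variable {K ι : Type*} [Field K] [DecidableEq ι] (s : Finset ι) (a : ι → K) {z : K}

theorem eval_prod_erase_X_sub_C (hz : ∀ j ∈ s, z ≠ a j) {k : ι} (hk : k ∈ s) :
    (∏ j ∈ s.erase k, (X - C (a j))).eval z =
      (∏ j ∈ s, (X - C (a j))).eval z * (z - a k)⁻¹ := by
  simp only [eval_prod, eval_sub, eval_X, eval_C]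
  rw [← prod_erase_mul s _ hk, mul_inv_cancel_right₀ (sub_ne_zero.2 (hz k hk))]

theorem eval_derivative_prod_X_sub_C (hz : ∀ j ∈ s, z ≠ a j) :
    (derivative (∏ j ∈ s, (X - C (a j)))).eval z =
      (∏ j ∈ s, (X - C (a j))).eval z * ∑ j ∈ s, (z - a j)⁻¹ := by
  rw [derivative_prod_X_sub_C, eval_finsetSum, mul_sum]
  exact sum_congr rfl fun k hk => eval_prod_erase_X_sub_C s a hz hk

theorem eval_iterate_derivative_two_prod_X_sub_C (hz : ∀ j ∈ s, z ≠ a j) :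
    (derivative^[2] (∏ j ∈ s, (X - C (a j)))).eval z =
      (∏ j ∈ s, (X - C (a j))).eval z *
        ((∑ j ∈ s, (z - a j)⁻¹) ^ 2 - ∑ j ∈ s, (z - a j)⁻¹ ^ 2) := by
  have hz_erase (k : ι) : ∀ j ∈ s.erase k, z ≠ a j := fun j hj => hz j (mem_of_mem_erase hj)
  rw [Function.iterate_succ_apply', Function.iterate_one, derivative_prod_X_sub_C,
    derivative_sum, eval_finsetSum, ← sum_mul_sum_erase, mul_sum]
  refine sum_congr rfl fun k hk => ?_
  rw [eval_derivative_prod_X_sub_C _ _ (hz_erase k), eval_prod_erase_X_sub_C s a hz hk, mul_assoc]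

end Polynomial

theorem stmt_4_general (n : ℕ) (lam : Fin n → ℂ)
    (f : Polynomial ℂ) (hf : f = ∏ j, (X - C (lam j))) (i : Fin n) (z : ℂ)
    (hz : f.eval z ≠ 0)
    (S1 S2 : ℂ)
    (hS1 : S1 = ∑ j ∈ Finset.univ.erase i, (z - lam j)⁻¹)
    (hS2 : S2 = ∑ j ∈ Finset.univ.erase i, ((z - lam j)⁻¹) ^ 2)
    (hden : 2 * (f.derivative.eval z) ^ 2 - f.eval z * (derivative^[2] f).eval z
        - (f.eval z) ^ 2 * (S2 + S1 ^ 2) ≠ 0) :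
    lam i = z - 2 * f.eval z * f.derivative.eval z /
      (2 * (f.derivative.eval z) ^ 2 - f.eval z * (derivative^[2] f).eval z
        - (f.eval z) ^ 2 * (S2 + S1 ^ 2)) := by
  subst hf
  have hroot : ∀ j ∈ univ, z ≠ lam j := fun j _ h =>
    hz (by rw [eval_prod]; exact prod_eq_zero (mem_univ j) (by simp [h]))
  rw [sum_erase_eq_sub (mem_univ i)] at hS1 hS2
  rw [eval_derivative_prod_X_sub_C _ _ hroot, eval_iterate_derivative_two_prod_X_sub_C _ _ hroot]
    at hden ⊢
  set P := (∏ j, (X - C (lam j))).eval z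
  set T := ∑ j, (z - lam j)⁻¹
  have hdenom : 2 * (P * T) ^ 2 - P * (P * (T ^ 2 - ∑ j, (z - lam j)⁻¹ ^ 2))
      - P ^ 2 * (S2 + S1 ^ 2) = 2 * P ^ 2 * T * (z - lam i)⁻¹ := by
    rw [hS1, hS2]; ring
  rw [hdenom] at hden ⊢
  rw [show 2 * P * (P * T) = 2 * P ^ 2 * T by ring,
    div_mul_cancel_left₀ (left_ne_zero_of_mul hden), inv_inv, sub_sub_cancel]

theorem stmt_4 (n : ℕ) (lam : Fin n → ℂ) (hdist : Function.Injective lam)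
    (f : Polynomial ℂ) (hf : f = ∏ j, (X - C (lam j))) (i : Fin n) (z : ℂ)
    (hz : f.eval z ≠ 0)
    (S1 S2 : ℂ)
    (hS1 : S1 = ∑ j ∈ Finset.univ.erase i, (z - lam j)⁻¹)
    (hS2 : S2 = ∑ j ∈ Finset.univ.erase i, ((z - lam j)⁻¹) ^ 2)
    (hden : 2 * (f.derivative.eval z) ^ 2 - f.eval z * (derivative^[2] f).eval z
        - (f.eval z) ^ 2 * (S2 + S1 ^ 2) ≠ 0)
    (hf' : f.derivative.eval z ≠ 0) :
    lam i = z - 2 * f.eval z * f.derivative.eval z /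
      (2 * (f.derivative.eval z) ^ 2 - f.eval z * (derivative^[2] f).eval z
        - (f.eval z) ^ 2 * (S2 + S1 ^ 2)) :=
  stmt_4_general n lam f hf i z hz S1 S2 hS1 hS2 hden
end

section
/- For any k ≥ 1 the complete homogeneous symmetric polynomial satisfies h_k = Σ over tuples (r₁,…,r_k) of nonnegative integers with r₁ + 2r₂ + ⋯ + k·r_k = k of ∏_{j=1}^k p_j^{r_j} / (r_j! · j^{r_j}), as symmetric polynomials in n variables over ℚ. -/
/-!
Both sides satisfy Newton's recursion `m f(m) = ∑_{i=1}^m p_i f(m - i)` with `f(0) = 1`, so they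
agree. For `h_m`, weight each monomial `x^d` of degree `m` by `m = ∑_l d_l` and observe that
`x^d` arises from `p_i h_{m-i}` once for every pair `(l, i)` with `1 ≤ i ≤ d_l`. The right-hand
side is the coefficient of `t^m` in `∏_j exp (p_j t^j / j)`; there `m = ∑_j j r_j`, and removing
one of the `r_j` parts of size `j` turns the term of `r` into `p_j` times a term of weight `m - j`.
-/

open Finset

lemma sum_mul_add_piSingle {ι : Type*} [Fintype ι] [DecidableEq ι] (w r : ι → ℕ) (l : ι)
    (a : ℕ) : ∑ i, w i * (r + Pi.single l a : ι → ℕ) i = ∑ i, w i * r i + w l * a := by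
  simp [mul_add, sum_add_distrib, Pi.single_apply]

lemma pow_mul_prod_pow_eq_prod_pow_add_piSingle {M σ : Type*} [CommMonoid M] [Fintype σ]
    [DecidableEq σ] (y : σ → M) (d : σ → ℕ) (l : σ) (a : ℕ) :
    y l ^ a * ∏ j, y j ^ d j = ∏ j, y j ^ (d + Pi.single l a : σ → ℕ) j := by
  simp only [Pi.add_apply, pow_add, prod_mul_distrib, Pi.single_apply, pow_ite, pow_zero,
    prod_ite_eq', mem_univ, if_true, mul_comm]

lemma card_Icc_one_filter_le {k a : ℕ} (h : a ≤ k) : #{i ∈ Icc 1 k | i ≤ a} = a := by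
  rw [show {i ∈ Icc 1 k | i ≤ a} = Icc 1 a by ext; simp; omega, Nat.card_Icc, Nat.add_sub_cancel]

lemma sum_fin_filter_succ_le {M : Type*} [AddCommMonoid M] (f : ℕ → M) {m N : ℕ} (h : m ≤ N) :
    ∑ j : Fin N with j.1 + 1 ≤ m, f (j.1 + 1) = ∑ i ∈ Icc 1 m, f i := by
  rw [sum_filter, Fin.sum_univ_eq_sum_range (fun j => if j + 1 ≤ m then f (j + 1) else 0),
    ← sum_filter, show {j ∈ range N | j + 1 ≤ m} = Ico 0 m by ext; simp; omega, sum_Ico_add',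
    zero_add, Ico_add_one_right_eq_Icc]

lemma eq_of_natCast_mul_eq_sum {K : Type*} [Field K] [CharZero K] {f g : ℕ → K} (a : ℕ → K)
    {N : ℕ} (h0 : f 0 = g 0)
    (hf : ∀ m ∈ Icc 1 N, (m : K) * f m = ∑ i ∈ Icc 1 m, a i * f (m - i))
    (hg : ∀ m ∈ Icc 1 N, (m : K) * g m = ∑ i ∈ Icc 1 m, a i * g (m - i)) :
    ∀ m ≤ N, f m = g m := by
  intro m
  induction m using Nat.strong_induction_on with
  | _ m ih =>
    intro hm
    rcases Nat.eq_zero_or_pos m with rfl | hpos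
    · exact h0
    have hmem : m ∈ Icc 1 N := mem_Icc.2 ⟨hpos, hm⟩
    refine mul_left_cancel₀ (Nat.cast_ne_zero.2 hpos.ne') ?_
    rw [hf m hmem, hg m hmem]
    exact sum_congr rfl fun i hi => by rw [ih (m - i) (by grind) (by omega)]

namespace Finset

variable {ι : Type*} [Fintype ι] [DecidableEq ι] {w : ι → ℕ}

/-- The bound `r i ≤ m` only makes the set finite: for positive weights it is implied by the
equation (`mem_weightedAntidiag`). -/
def weightedAntidiag (w : ι → ℕ) (m : ℕ) : Finset (ι → ℕ) :=
  {r ∈ Fintype.piFinset fun _ => range (m + 1) | ∑ i, w i * r i = m}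

lemma le_of_mem_weightedAntidiag {m : ℕ} {r : ι → ℕ} (hr : r ∈ weightedAntidiag w m) (i : ι) :
    w i * r i ≤ m := by
  rw [← (mem_filter.1 hr).2]
  exact single_le_sum (fun j _ => Nat.zero_le (w j * r j)) (mem_univ i)

lemma mem_weightedAntidiag (hw : ∀ i, 0 < w i) {m : ℕ} {r : ι → ℕ} :
    r ∈ weightedAntidiag w m ↔ ∑ i, w i * r i = m := by
  refine ⟨fun hr => (mem_filter.1 hr).2, fun hr => mem_filter.2 ⟨?_, hr⟩⟩
  refine Fintype.mem_piFinset.2 fun i => mem_range.2 (Nat.lt_succ_of_le ?_)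
  rw [← hr]
  exact (Nat.le_mul_of_pos_left _ (hw i)).trans
    (single_le_sum (fun j _ => Nat.zero_le (w j * r j)) (mem_univ i))

lemma weightedAntidiag_zero (hw : ∀ i, 0 < w i) : weightedAntidiag w 0 = {0} := by
  ext r
  simp [mem_weightedAntidiag hw, Finset.sum_eq_zero_iff, (hw _).ne', funext_iff]

lemma apply_eq_zero_of_mem_weightedAntidiag {m : ℕ} {r : ι → ℕ} (hr : r ∈ weightedAntidiag w m)
    {i : ι} (hi : m < w i) : r i = 0 := by
  by_contra h
  have := le_of_mem_weightedAntidiag hr i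
  have := Nat.le_mul_of_pos_right (w i) (Nat.pos_of_ne_zero h)
  omega

lemma sum_weightedAntidiag_add_mul {M : Type*} [AddCommMonoid M] (hw : ∀ i, 0 < w i) (l : ι)
    (m a : ℕ) (f : (ι → ℕ) → M) :
    ∑ r ∈ weightedAntidiag w (m + w l * a) with a ≤ r l, f r =
      ∑ r ∈ weightedAntidiag w m, f (r + Pi.single l a) := by
  have hsplit {r : ι → ℕ} (h : a ≤ r l) : r - Pi.single l a + Pi.single l a = r :=
    tsub_add_cancel_of_le fun i => by by_cases hi : i = l <;> simp [hi, h]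
  refine sum_nbij' (· - Pi.single l a) (· + Pi.single l a) ?_ ?_ ?_ ?_ ?_
  · intro r hr
    simp only [mem_filter, mem_weightedAntidiag hw] at hr ⊢
    rw [← hsplit hr.2, sum_mul_add_piSingle] at hr
    omega
  · intro r hr
    simp only [mem_filter, mem_weightedAntidiag hw] at hr ⊢
    exact ⟨by rw [sum_mul_add_piSingle, hr], by simp⟩
  · exact fun r hr => hsplit (mem_filter.1 hr).2
  · exact fun r _ => add_tsub_cancel_right r _
  · exact fun r hr => by rw [hsplit (mem_filter.1 hr).2]

end Finset

namespace MvPolynomial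

variable (σ R : Type*) [Fintype σ] [DecidableEq σ] [CommSemiring R]

lemma hsymm_eq_sum_weightedAntidiag (k : ℕ) :
    hsymm σ R k = ∑ d ∈ weightedAntidiag 1 k, ∏ l, X l ^ d l := by
  have hA : weightedAntidiag (1 : σ → ℕ) k = piAntidiag univ k := by
    ext d
    rw [mem_weightedAntidiag (w := 1) fun _ => Nat.one_pos]
    simp [mem_piAntidiag]
  rw [hA, ← map_sym_eq_piAntidiag, sum_map, hsymm, ← sym_univ]
  refine sum_congr rfl fun s _ => ?_
  rw [prod_multiset_map_count]
  exact prod_subset (subset_univ _) fun l _ hl => by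
    rw [Multiset.count_eq_zero.2 (by simpa using hl), pow_zero]

theorem natCast_mul_hsymm (k : ℕ) :
    (k : MvPolynomial σ R) * hsymm σ R k = ∑ i ∈ Icc 1 k, psum σ R i * hsymm σ R (k - i) := by
  have hw : ∀ l : σ, 0 < (1 : σ → ℕ) l := fun _ => Nat.one_pos
  have hshift : ∀ i ∈ Icc 1 k, psum σ R i * hsymm σ R (k - i) =
      ∑ l, ∑ d ∈ weightedAntidiag 1 k with i ≤ d l, ∏ j, X j ^ d j := by
    intro i hi
    rw [psum, hsymm_eq_sum_weightedAntidiag, sum_mul]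
    refine sum_congr rfl fun l _ => ?_
    simp_rw [mul_sum, pow_mul_prod_pow_eq_prod_pow_add_piSingle]
    rw [← sum_weightedAntidiag_add_mul hw l (k - i) i fun d => ∏ j, X j ^ d j, Pi.one_apply,
      one_mul, Nat.sub_add_cancel (mem_Icc.1 hi).2]
  have hcount (l : σ) : ∑ i ∈ Icc 1 k, ∑ d ∈ weightedAntidiag 1 k with i ≤ d l, ∏ j, X j ^ d j =
      ∑ d ∈ weightedAntidiag 1 k, d l • ∏ j, (X j : MvPolynomial σ R) ^ d j := by
    simp_rw [sum_filter]
    rw [sum_comm]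
    refine sum_congr rfl fun d hd => ?_
    have hdl : d l ≤ k := by simpa using le_of_mem_weightedAntidiag hd l
    rw [← sum_filter, sum_const, card_Icc_one_filter_le hdl]
  rw [sum_congr rfl hshift, sum_comm, sum_congr rfl fun l _ => hcount l, sum_comm,
    hsymm_eq_sum_weightedAntidiag, mul_sum]
  refine sum_congr rfl fun d hd => ?_
  have hdeg : ∑ l, d l = k := by simpa using (mem_weightedAntidiag hw).1 hd
  rw [← sum_smul, hdeg, nsmul_eq_mul]

end MvPolynomial

section ExpSumCoeff

open Nat

variable {ι K : Type*} [Fintype ι] [DecidableEq ι] [Field K] {w : ι → ℕ}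

/-- The coefficient of `t ^ m` in `∏ i, exp (c i * t ^ w i)`. -/
def expSumCoeff (w : ι → ℕ) (c : ι → K) (m : ℕ) : K :=
  ∑ r ∈ weightedAntidiag w m, ∏ i, c i ^ r i / (r i)!

lemma expSumCoeff_zero (hw : ∀ i, 0 < w i) (c : ι → K) : expSumCoeff w c 0 = 1 := by
  simp [expSumCoeff, weightedAntidiag_zero hw]

variable [CharZero K]

lemma mul_prod_pow_div_factorial_add_piSingle (c : ι → K) (r : ι → ℕ) (l : ι) :
    (r l + 1 : K) * ∏ i, c i ^ (r + Pi.single l 1 : ι → ℕ) i / ((r + Pi.single l 1 : ι → ℕ) i)! =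
      c l * ∏ i, c i ^ r i / (r i)! := by
  rw [Fintype.prod_eq_mul_prod_compl l,
    Fintype.prod_eq_mul_prod_compl l (fun i => c i ^ r i / (r i)!)]
  have hcompl : ∏ i ∈ {l}ᶜ, c i ^ (r + Pi.single l 1 : ι → ℕ) i / ((r + Pi.single l 1 : ι → ℕ) i)!
      = ∏ i ∈ {l}ᶜ, c i ^ r i / (r i)! :=
    prod_congr rfl fun i hi => by
      rw [Pi.add_apply, Pi.single_eq_of_ne (by simpa using hi), add_zero]
  rw [hcompl, Pi.add_apply, Pi.single_eq_same, factorial_succ, pow_succ]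
  push_cast
  field_simp

theorem natCast_mul_expSumCoeff (hw : ∀ i, 0 < w i) (c : ι → K) (m : ℕ) :
    (m : K) * expSumCoeff w c m = ∑ i with w i ≤ m, w i * c i * expSumCoeff w c (m - w i) := by
  set F : (ι → ℕ) → K := fun r => ∏ i, c i ^ r i / (r i)!
  have hterm (i : ι) : ∑ r ∈ weightedAntidiag w m, (r i : K) * F r =
      if w i ≤ m then c i * expSumCoeff w c (m - w i) else 0 := by
    split_ifs with hi
    · obtain ⟨m', rfl⟩ : ∃ m', m = m' + w i * 1 := ⟨m - w i, by omega⟩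
      rw [← sum_filter_of_ne (p := fun r => 1 ≤ r i) fun r _ hr =>
          Nat.one_le_iff_ne_zero.2 fun h => by simp [h] at hr,
        sum_weightedAntidiag_add_mul hw i m' 1 fun r => (r i : K) * F r, expSumCoeff, mul_sum,
        Nat.mul_one, Nat.add_sub_cancel]
      refine sum_congr rfl fun r _ => ?_
      simpa [F] using mul_prod_pow_div_factorial_add_piSingle c r i
    · exact sum_eq_zero fun r hr => by
        rw [apply_eq_zero_of_mem_weightedAntidiag hr (not_le.1 hi), Nat.cast_zero, zero_mul]
  calc (m : K) * expSumCoeff w c m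
      = ∑ r ∈ weightedAntidiag w m, ((∑ i, w i * r i : ℕ) : K) * F r := by
        rw [expSumCoeff, mul_sum]
        exact sum_congr rfl fun r hr => by rw [(mem_weightedAntidiag hw).1 hr]
    _ = ∑ i, (w i : K) * ∑ r ∈ weightedAntidiag w m, (r i : K) * F r := by
        simp_rw [Nat.cast_sum, Nat.cast_mul, sum_mul, mul_sum, mul_assoc]
        exact sum_comm
    _ = ∑ i with w i ≤ m, w i * c i * expSumCoeff w c (m - w i) := by
        simp_rw [hterm, mul_ite, mul_zero, sum_filter, mul_assoc]

end ExpSumCoeff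

open MvPolynomial in
theorem stmt_8_general (n : ℕ) (x : Fin n → ℚ) (k : ℕ) :
    (∑ m ∈ (Finset.univ : Finset (Fin n)).sym k, ((m : Multiset (Fin n)).map x).prod) =
      ∑ r ∈ (Fintype.piFinset fun _ : Fin k => Finset.range (k + 1)).filter
          (fun r => ∑ j, (j.1 + 1) * r j = k),
        ∏ j, (∑ l, x l ^ (j.1 + 1)) ^ (r j) /
          ((r j).factorial * ((j.1 + 1 : ℕ) : ℚ) ^ (r j)) := by
  set p : ℕ → ℚ := fun i => ∑ l, x l ^ i
  set w : Fin k → ℕ := fun j => j.1 + 1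
  set c : Fin k → ℚ := fun j => p (j.1 + 1) / (j.1 + 1 : ℕ)
  have hw (j : Fin k) : 0 < w j := Nat.succ_pos j
  have hnewton (m : ℕ) : (m : ℚ) * eval x (hsymm (Fin n) ℚ m) =
      ∑ i ∈ Icc 1 m, p i * eval x (hsymm (Fin n) ℚ (m - i)) := by
    simpa [p, psum] using congrArg (eval x) (natCast_mul_hsymm (Fin n) ℚ m)
  have hexp : ∀ m ∈ Icc 1 k, (m : ℚ) * expSumCoeff w c m =
      ∑ i ∈ Icc 1 m, p i * expSumCoeff w c (m - i) := by
    intro m hm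
    rw [natCast_mul_expSumCoeff hw, ← sum_fin_filter_succ_le _ (mem_Icc.1 hm).2]
    refine sum_congr rfl fun j _ => ?_
    simp only [w, c]
    rw [mul_div_cancel₀ _ (Nat.cast_ne_zero.2 (Nat.succ_ne_zero j))]
  have hk := eq_of_natCast_mul_eq_sum p (by simp [expSumCoeff_zero hw]) (fun m _ => hnewton m)
    hexp k le_rfl
  convert hk using 1
  · simp [hsymm, sym_univ, map_multiset_prod]
  · exact sum_congr rfl fun r _ => prod_congr rfl fun j _ => by rw [div_pow, div_div, mul_comm]

theorem stmt_8 (n : ℕ) (x : Fin n → ℚ) (k : ℕ) (hk : 1 ≤ k) :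
    (∑ m ∈ (Finset.univ : Finset (Fin n)).sym k, ((m : Multiset (Fin n)).map x).prod) =
      ∑ r ∈ (Fintype.piFinset fun _ : Fin k => Finset.range (k + 1)).filter
          (fun r => ∑ j, (j.1 + 1) * r j = k),
        ∏ j, (∑ l, x l ^ (j.1 + 1)) ^ (r j) /
          ((r j).factorial * ((j.1 + 1 : ℕ) : ℚ) ^ (r j)) :=
  stmt_8_general n x k
end

section
/- Let f(z) = zⁿ + a_{n-1}z^{n-1} + ⋯ + a₀ = ∏_{j=1}^n (z − λⱼ) over ℂ with n ≥ 2. Fix i and z ∈ ℂ with z ≠ λⱼ for all j. Then (z − λᵢ)² − (nz + a_{n-1})(z − λᵢ) + f(z)·e_{n-2;i} = 0, where e_{n-2;i} = e_{n-2}(1/(z−λ₁),…,1/(z−λ_{i-1}),1/(z−λ_{i+1}),…,1/(z−λₙ)). -/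
/-!
Write `wⱼ = z - λⱼ`. Then `f z = ∏ⱼ wⱼ` and, by Vieta, `n z + a_{n-1} = ∑ⱼ wⱼ`. Since the
`(m-1)`-subsets of an `m`-set are the complements of its points,
`(∏_{j ≠ i} wⱼ) · e_{n-2;i} = ∑_{k ≠ i} w_k`, and the identity reduces to
`wᵢ² - wᵢ (wᵢ + S) + wᵢ S = 0` with `S = ∑_{k ≠ i} w_k`.
-/

open Finset Polynomial

theorem Finset.sum_powersetCard_card_sub_one {ι M : Type*} [DecidableEq ι] [AddCommMonoid M]
    {t : Finset ι} (ht : t.Nonempty) (g : Finset ι → M) :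
    ∑ s ∈ t.powersetCard (#t - 1), g s = ∑ k ∈ t, g (t.erase k) := by
  refine (sum_bij (fun k _ ↦ t.erase k) (fun k hk ↦ ?_) (fun a ha b _ ↦ (erase_inj t ha).1)
    (fun s hs ↦ ?_) fun _ _ ↦ rfl).symm
  · simp [mem_powersetCard, card_erase_of_mem hk, erase_subset]
  · obtain ⟨hst, hcard⟩ := mem_powersetCard.1 hs
    have hcov : s ⋖ t := covBy_iff_card_sdiff_eq_one.2
      ⟨hst, by have := ht.card_pos; rw [card_sdiff_of_subset hst, hcard]; omega⟩
    obtain ⟨k, hk, rfl⟩ := hcov.exists_finset_erase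
    exact ⟨k, hk, rfl⟩

theorem Finset.prod_mul_sum_powersetCard_card_sub_one_inv {ι K : Type*} [DecidableEq ι]
    [Semifield K] {t : Finset ι} (ht : t.Nonempty) {w : ι → K} (hw : ∀ j ∈ t, w j ≠ 0) :
    (∏ j ∈ t, w j) * ∑ s ∈ t.powersetCard (#t - 1), ∏ j ∈ s, (w j)⁻¹ = ∑ j ∈ t, w j := by
  rw [sum_powersetCard_card_sub_one ht, mul_sum]
  refine sum_congr rfl fun k hk ↦ ?_
  have hne : ∏ j ∈ t.erase k, w j ≠ 0 := prod_ne_zero_iff.2 fun j hj ↦ hw j (mem_of_mem_erase hj)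
  rw [← mul_prod_erase t w hk, prod_inv_distrib, mul_assoc, mul_inv_cancel₀ hne, mul_one]

theorem stmt_11 (n : ℕ) (hn : 2 ≤ n) (lam : Fin n → ℂ) (f : Polynomial ℂ)
    (hf : f = ∏ j, (X - C (lam j))) (i : Fin n) (z : ℂ) (hz : ∀ j, z ≠ lam j) :
    (z - lam i) ^ 2 - ((n : ℂ) * z + f.coeff (n - 1)) * (z - lam i)
        + f.eval z * (∑ s ∈ Finset.powersetCard (n - 2) (Finset.univ.erase i),
            ∏ j ∈ s, (z - lam j)⁻¹) = 0 := by
  have hcoeff : f.coeff (n - 1) = -∑ j, lam j := by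
    simpa [hf] using prod_X_sub_C_coeff_card_pred univ lam (by simp; omega)
  have heval : f.eval z = (z - lam i) * ∏ j ∈ univ.erase i, (z - lam j) := by
    rw [mul_prod_erase _ (fun j ↦ z - lam j) (mem_univ i), hf, eval_prod]
    simp
  have hlinear :
      (n : ℂ) * z + f.coeff (n - 1) = (z - lam i) + ∑ j ∈ univ.erase i, (z - lam j) := by
    rw [add_sum_erase _ (fun j ↦ z - lam j) (mem_univ i), hcoeff, sum_sub_distrib]
    simp [sub_eq_add_neg]
  have hcard : #(univ.erase i) = n - 1 := by simp [card_erase_of_mem]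
  have hne : (univ.erase i).Nonempty := card_pos.1 (by omega)
  rw [heval, hlinear, show n - 2 = #(univ.erase i) - 1 by omega, mul_assoc,
    prod_mul_sum_powersetCard_card_sub_one_inv hne fun j _ ↦ sub_ne_zero.2 (hz j)]
  ring
end

section
/- Let f(z) = zⁿ + a_{n-1}z^{n-1} + ⋯ + a₀ = ∏_{j=1}^n (z − λⱼ) over ℂ, and let 0 ≤ m ≤ n. For z with f(z) ≠ 0, f(z) · e_{n-m}(1/(z−λ₁),…,1/(z−λₙ)) = Σ_{l=0}^m a_{n-m+l} · C(n−m+l, n−m) · z^l, where aₙ = 1 and C denotes the binomial coefficient. -/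
/-!
Multiplying `e_{n-m}(1/(z-λ₁), …, 1/(z-λₙ))` by `f(z) = ∏ (z - λⱼ)` turns each term into the
product of the `m` complementary factors, so the left side is `e_m(z-λ₁, …, z-λₙ)`. By Vieta
this is the coefficient of `X^{n-m}` in the Taylor shift `f(X + z) = ∏ (X + (z - λⱼ))`, i.e. the
`(n-m)`-th Hasse derivative of `f` at `z`, whose expansion in the coefficients of `f` is the
right side.
-/

open Finset Polynomial

theorem Finset.prod_mul_sum_powersetCard_prod_inv {ι K : Type*} [Fintype ι] [DecidableEq ι]
    [Semifield K] (x : ι → K) (hx : ∀ i, x i ≠ 0) {k l : ℕ} (hkl : k + l = Fintype.card ι) :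
    (∏ i, x i) * ∑ s ∈ powersetCard k univ, ∏ i ∈ s, (x i)⁻¹ =
      ∑ t ∈ powersetCard l univ, ∏ i ∈ t, x i := by
  rw [mul_sum]
  refine sum_nbij' (fun s => sᶜ) (fun t => tᶜ) ?_ ?_ (fun s _ => compl_compl s)
    (fun t _ => compl_compl t) ?_
  · intro s hs
    simp only [mem_powersetCard_univ, card_compl] at hs ⊢
    omega
  · intro t ht
    simp only [mem_powersetCard_univ, card_compl] at ht ⊢
    omega
  · intro s _
    rw [← prod_mul_prod_compl s x, mul_right_comm, ← prod_mul_distrib]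
    simp [mul_inv_cancel₀ (hx _)]

theorem Polynomial.coeff_taylor_prod_X_sub_C {ι R : Type*} [Fintype ι] [CommRing R]
    (lam : ι → R) (z : R) {k l : ℕ} (hkl : k + l = Fintype.card ι) :
    (taylor z (∏ i, (X - C (lam i)))).coeff k =
      ∑ t ∈ powersetCard l univ, ∏ i ∈ t, (z - lam i) := by
  have hshift : taylor z (∏ i, (X - C (lam i))) = ∏ i, (X + C (z - lam i)) := by
    simp only [taylor_apply, prod_comp, sub_comp, X_comp, C_comp, C_sub]
    congr! 1 with i
    ring
  rw [hshift, prod_X_add_C_coeff _ _ (by rw [card_univ]; omega), card_univ,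
    show Fintype.card ι - k = l by omega]

theorem Polynomial.eval_hasseDeriv_eq_sum_range {R : Type*} [CommSemiring R] (f : R[X])
    (z : R) {k m : ℕ} (hf : f.natDegree ≤ k + m) :
    (hasseDeriv k f).eval z = ∑ l ∈ range (m + 1), f.coeff (k + l) * (k + l).choose k * z ^ l := by
  have hdeg : (hasseDeriv k f).natDegree < m + 1 := by
    have := natDegree_hasseDeriv_le f k
    omega
  rw [eval_eq_sum_range' hdeg]
  refine sum_congr rfl fun l _ => ?_
  rw [hasseDeriv_coeff, add_comm l k]
  ring

theorem stmt_14 (n : ℕ) (lam : Fin n → ℂ) (f : Polynomial ℂ)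
    (hf : f = ∏ j, (X - C (lam j))) (m : ℕ) (hm : m ≤ n) (z : ℂ)
    (hz : f.eval z ≠ 0) :
    f.eval z * (∑ s ∈ Finset.powersetCard (n - m) (Finset.univ : Finset (Fin n)),
        ∏ j ∈ s, (z - lam j)⁻¹) =
      ∑ l ∈ Finset.range (m + 1),
        f.coeff (n - m + l) * ((n - m + l).choose (n - m) : ℂ) * z ^ l := by
  have hfz : f.eval z = ∏ j, (z - lam j) := by simp [hf, eval_prod]
  have hroot : ∀ j, z - lam j ≠ 0 := fun j h =>
    hz (hfz ▸ prod_eq_zero (mem_univ j) h)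
  have hcard : n - m + m = Fintype.card (Fin n) := by rw [Fintype.card_fin]; omega
  have hdeg : f.natDegree = n := by
    rw [hf, natDegree_prod_of_monic _ _ fun j _ => monic_X_sub_C (lam j)]
    simp
  rw [hfz, prod_mul_sum_powersetCard_prod_inv _ hroot hcard,
    ← coeff_taylor_prod_X_sub_C lam z hcard, ← hf, taylor_coeff,
    eval_hasseDeriv_eq_sum_range (m := m) f z (by omega)]
end

section
/- Let f(z) = ∏_{j=1}^n (z−λⱼ) be monic over ℂ with distinct roots, n ≥ 2. Fix i, let z ∈ ℂ with z ≠ λⱼ for all j, and suppose nz + a_{n-1} ≠ 0 where a_{n-1} = −Σⱼλⱼ. Let W = f(z)/∏_{j≠i}(z−λⱼ). Then λᵢ = z − (W/(nz + a_{n-1}))·((n−1)z − Σ_{j≠i}λⱼ + W). -/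
open Finset

/-!
The Weierstrass correction is `W = z - λᵢ`, and `(n - 1) z - ∑_{j ≠ i} λⱼ + W = ∑ⱼ (z - λⱼ)
= n z + a_{n-1}`, so `W` is multiplied by `1` in the formula.
-/

theorem Finset.prod_div_prod_erase {ι K : Type*} [DecidableEq ι] [CommGroupWithZero K]
    {s : Finset ι} {f : ι → K} {i : ι} (hi : i ∈ s) (hf : ∀ j ∈ s.erase i, f j ≠ 0) :
    (∏ j ∈ s, f j) / ∏ j ∈ s.erase i, f j = f i := by
  rw [← mul_prod_erase s f hi, mul_div_assoc, div_self (prod_ne_zero_iff.2 hf), mul_one]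

theorem stmt_17_general (n : ℕ) (lam : Fin n → ℂ)
    (i : Fin n) (z : ℂ)
    (hz : ∀ j, z ≠ lam j)
    (ha : (n : ℂ) * z + (-∑ j, lam j) ≠ 0) :
    let W : ℂ := (∏ j, (z - lam j)) / ∏ j ∈ Finset.univ.erase i, (z - lam j)
    lam i = z - (W / ((n : ℂ) * z + (-∑ j, lam j))) *
      (((n : ℂ) - 1) * z - (∑ j ∈ Finset.univ.erase i, lam j) + W) := by
  intro W
  have hW : W = z - lam i :=
    prod_div_prod_erase (mem_univ i) fun j _ ↦ sub_ne_zero.2 (hz j)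
  have hsum : ((n : ℂ) - 1) * z - ∑ j ∈ univ.erase i, lam j + W = (n : ℂ) * z + (-∑ j, lam j) := by
    rw [hW, ← add_sum_erase _ lam (mem_univ i)]
    ring
  rw [hsum, div_mul_cancel₀ _ ha, hW, sub_sub_cancel]

theorem stmt_17 (n : ℕ) (hn : 2 ≤ n) (lam : Fin n → ℂ)
    (hdist : Function.Injective lam) (i : Fin n) (z : ℂ)
    (hz : ∀ j, z ≠ lam j)
    (ha : (n : ℂ) * z + (-∑ j, lam j) ≠ 0) :
    let W : ℂ := (∏ j, (z - lam j)) / ∏ j ∈ Finset.univ.erase i, (z - lam j)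
    lam i = z - (W / ((n : ℂ) * z + (-∑ j, lam j))) *
      (((n : ℂ) - 1) * z - (∑ j ∈ Finset.univ.erase i, lam j) + W) :=
  stmt_17_general n lam i z hz ha
end

section
/- For n−1 complex numbers μⱼ = z − λⱼ (j ≠ i) and m ≥ 0, e_m(μ₁,…,μ_{n-1}) = Σ_{l=0}^m binom(n−1−m+l, l) · (Σ_{(r₁,…,r_{m-l}): r₁+2r₂+⋯+(m-l)r_{m-l}=m-l} ∏_{j=1}^{m-l} (−bⱼ)^{r_j}/(r_j!·j^{r_j})) · z^l, where b_k = Σ_{j≠i} λⱼ^k, and the inner sum is 1 when m−l = 0. -/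
/-!
Put `x j = -λ j` and `N = n - 1`. Expanding `∏_{j ∈ s} (x j + z)` over the subsets `u ⊆ s`
and counting, for each `k`-subset `u`, the `C(N - k, m - k)` sets `s` of size `m` containing it,
gives `e_m(x + z) = ∑_k C(N - k, m - k) e_k(x) z^(m - k)`.

It remains to identify `e_k(-λ)` with the cycle index `Z(S_k)` evaluated at `p_j = -b_j`.
Newton's identities say `k e_k(-λ) = ∑_{d < k} (-b_{d+1}) e_{k-d-1}(-λ)`. The cycle index satisfies
the same recursion: splitting `k = ∑_j (j + 1) r_j` inside each summand, the term
`(j + 1) r_j ∏ᵢ c_{i+1}^{r_i} / (r_i! (i+1)^{r_i})` equals `c_{j+1}` times the summand of the tuple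
with `r_j` lowered by one. Both sequences start at `1`, so they agree.
-/

open Finset

section Binomial

variable {ι R : Type*} [DecidableEq ι] [CommSemiring R]

lemma prod_add_const_eq_sum_powersetCard (s : Finset ι) (x : ι → R) (z : R) :
    ∏ j ∈ s, (x j + z) =
      ∑ k ∈ range (#s + 1), ∑ u ∈ s.powersetCard k, (∏ j ∈ u, x j) * z ^ (#s - k) := by
  rw [prod_add, sum_powerset]
  refine sum_congr rfl fun k _ => sum_congr rfl fun u hu => ?_
  obtain ⟨hus, rfl⟩ := mem_powersetCard.1 hu
  rw [prod_const, card_sdiff_of_subset hus]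

lemma sum_powersetCard_prod_add_const (S : Finset ι) (x : ι → R) (z : R) (m : ℕ) :
    ∑ s ∈ S.powersetCard m, ∏ j ∈ s, (x j + z) =
      ∑ k ∈ range (m + 1),
        ((#S - k).choose (m - k) : R) * (∑ u ∈ S.powersetCard k, ∏ j ∈ u, x j) * z ^ (m - k) := by
  calc ∑ s ∈ S.powersetCard m, ∏ j ∈ s, (x j + z)
      = ∑ s ∈ S.powersetCard m, ∑ k ∈ range (m + 1), ∑ u ∈ s.powersetCard k,
          (∏ j ∈ u, x j) * z ^ (m - k) := by
        refine sum_congr rfl fun s hs => ?_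
        rw [prod_add_const_eq_sum_powersetCard, (mem_powersetCard.1 hs).2]
    _ = ∑ k ∈ range (m + 1), ∑ u ∈ S.powersetCard k, ∑ s ∈ S.powersetCard m with u ⊆ s,
          (∏ j ∈ u, x j) * z ^ (m - k) := by
        rw [sum_comm]
        refine sum_congr rfl fun k _ => sum_comm' fun s u => ?_
        simp only [mem_powersetCard, mem_filter]
        constructor
        · rintro ⟨⟨hsS, hs⟩, hus, hu⟩
          exact ⟨⟨⟨hsS, hs⟩, hus⟩, hus.trans hsS, hu⟩
        · rintro ⟨⟨hs, hus⟩, -, hu⟩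
          exact ⟨hs, hus, hu⟩
    _ = _ := by
        refine sum_congr rfl fun k hk => ?_
        rw [mul_sum, sum_mul]
        have hkm : k ≤ m := Nat.lt_succ_iff.1 (mem_range.1 hk)
        refine sum_congr rfl fun u hu => ?_
        obtain ⟨huS, rfl⟩ := mem_powersetCard.1 hu
        rw [sum_const, card_filter_powersetCard_subset u S m huS hkm, nsmul_eq_mul, mul_assoc]

end Binomial

section Newton

variable {ι R : Type*} [CommRing R]

lemma aeval_esymm_subtype (S : Finset ι) (x : ι → R) (k : ℕ) :
    MvPolynomial.aeval (fun j : S => x j) (MvPolynomial.esymm S R k) =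
      ∑ t ∈ S.powersetCard k, ∏ j ∈ t, x j := by
  rw [MvPolynomial.aeval_esymm_eq_multiset_esymm, ← Finset.esymm_map_val, univ_eq_attach,
    attach_val]
  exact congrArg (Multiset.esymm · k) (Multiset.attach_map_val' _ x)

lemma aeval_psum_subtype (S : Finset ι) (x : ι → R) (k : ℕ) :
    MvPolynomial.aeval (fun j : S => x j) (MvPolynomial.psum S R k) = ∑ j ∈ S, x j ^ k := by
  simp only [MvPolynomial.psum, map_sum, map_pow, MvPolynomial.aeval_X]
  exact sum_coe_sort S (x · ^ k)

lemma mul_sum_powersetCard_prod_neg (S : Finset ι) (x : ι → R) (k : ℕ) :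
    (k : R) * ∑ t ∈ S.powersetCard k, ∏ j ∈ t, -x j =
      ∑ d ∈ range k,
        -(∑ j ∈ S, x j ^ (d + 1)) * ∑ t ∈ S.powersetCard (k - (d + 1)), ∏ j ∈ t, -x j := by
  have newton := congrArg (MvPolynomial.aeval fun j : S => -x j)
    (MvPolynomial.mul_esymm_eq_sum S R k)
  simp only [map_mul, map_sum, map_pow, map_neg, map_one, map_natCast,
    aeval_esymm_subtype S (fun j => -x j), aeval_psum_subtype S (fun j => -x j)] at newton
  rw [newton, mul_sum]
  refine sum_nbij' (fun a => a.2 - 1) (fun d => (k - (d + 1), d + 1)) ?_ ?_ ?_ ?_ ?_ <;>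
    try (intro a ha; simp only [mem_filter, HasAntidiagonal.mem_antidiagonal, mem_range,
      Prod.ext_iff] at ha ⊢; omega)
  rintro ⟨i, _ | d⟩ ha <;> simp only [mem_filter, HasAntidiagonal.mem_antidiagonal] at ha
  · omega
  obtain ⟨rfl, -⟩ := ha
  have hsign : (-1 : R) ^ (i + (d + 1) + 1) * (-1) ^ i * (-1) ^ (d + 1) = -1 := by
    rw [← pow_add, ← pow_add]
    exact Odd.neg_one_pow ⟨i + d + 1, by ring⟩
  simp only [neg_pow (x _), ← mul_sum, Nat.add_sub_cancel]
  linear_combination ((∑ j ∈ S, x j ^ (d + 1)) * ∑ t ∈ S.powersetCard i, ∏ j ∈ t, -x j) * hsign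

end Newton

section CycleIndex

variable {K : Type*} [Field K]

def cycleTerm (c : ℕ → K) (j k : ℕ) : K :=
  c (j + 1) ^ k / ((k.factorial : K) * ((j + 1 : ℕ) : K) ^ k)

def weightedTuples (s u : ℕ) : Finset (Fin s → ℕ) :=
  {r ∈ Fintype.piFinset fun _ : Fin s => range (s + 1) | ∑ j, (j.1 + 1) * r j = u}

/-- For `u ≤ s` this is the cycle index `Z(S_u)` evaluated at `p_{j+1} = c (j + 1)`: the tuple `r`
records `r_j` cycles of length `j + 1`. The length `s` of the tuples and the bound `s + 1` on their
entries only serve to make the index set a `Finset`. -/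
def cycleIndex (c : ℕ → K) (s u : ℕ) : K :=
  ∑ r ∈ weightedTuples s u, ∏ j, cycleTerm c j.1 (r j)

lemma cycleTerm_zero (c : ℕ → K) (j : ℕ) : cycleTerm c j 0 = 1 := by
  simp [cycleTerm]

lemma natCast_mul_cycleTerm_succ [CharZero K] (c : ℕ → K) (j k : ℕ) :
    (((j + 1) * (k + 1) : ℕ) : K) * cycleTerm c j (k + 1) = c (j + 1) * cycleTerm c j k := by
  simp only [cycleTerm, Nat.factorial_succ]
  push_cast
  field_simp
  ring

lemma mul_le_of_mem_weightedTuples {s u : ℕ} {r : Fin s → ℕ} (hr : r ∈ weightedTuples s u)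
    (j : Fin s) : (j.1 + 1) * r j ≤ u := by
  rw [← (mem_filter.1 hr).2]
  exact single_le_sum (f := fun i : Fin s => (i.1 + 1) * r i) (fun _ _ => Nat.zero_le _)
    (mem_univ j)

lemma mem_weightedTuples {s u : ℕ} (hu : u ≤ s) {r : Fin s → ℕ} :
    r ∈ weightedTuples s u ↔ ∑ j, (j.1 + 1) * r j = u := by
  refine ⟨fun hr => (mem_filter.1 hr).2, fun hr => mem_filter.2 ⟨?_, hr⟩⟩
  refine Fintype.mem_piFinset.2 fun j => mem_range.2 ?_
  have := single_le_sum (f := fun i : Fin s => (i.1 + 1) * r i) (fun _ _ => Nat.zero_le _)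
    (mem_univ j)
  simp only [hr] at this
  nlinarith

lemma weightedTuples_zero (s : ℕ) : weightedTuples s 0 = {0} := by
  ext r
  simp [mem_weightedTuples (Nat.zero_le s), sum_eq_zero_iff, funext_iff]

lemma cycleIndex_zero (c : ℕ → K) (s : ℕ) : cycleIndex c s 0 = 1 := by
  simp [cycleIndex, weightedTuples_zero, cycleTerm_zero]

lemma weight_add_single {s : ℕ} (r : Fin s → ℕ) (j : Fin s) :
    ∑ i : Fin s, (i.1 + 1) * (r + Pi.single j 1 : Fin s → ℕ) i =
      ∑ i : Fin s, (i.1 + 1) * r i + (j.1 + 1) := by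
  simp [mul_add, sum_add_distrib, Pi.single_apply]

lemma sub_single_add_single {s : ℕ} {r : Fin s → ℕ} {j : Fin s} (h : r j ≠ 0) :
    r - Pi.single j 1 + Pi.single j 1 = r := by
  funext i
  rcases eq_or_ne i j with rfl | hi
  · simp only [Pi.add_apply, Pi.sub_apply, Pi.single_eq_same]
    omega
  · simp [Pi.single_eq_of_ne hi]

lemma natCast_mul_prod_cycleTerm_add_single [CharZero K] (c : ℕ → K) {s : ℕ} (r : Fin s → ℕ)
    (j : Fin s) :
    (((j.1 + 1) * (r j + 1) : ℕ) : K) * ∏ i, cycleTerm c i.1 ((r + Pi.single j 1 : Fin s → ℕ) i) =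
      c (j + 1) * ∏ i, cycleTerm c i.1 (r i) := by
  rw [← mul_prod_erase _ _ (mem_univ j), ← mul_prod_erase _ _ (mem_univ j),
    prod_congr rfl fun i hi => by
      rw [Pi.add_apply, Pi.single_eq_of_ne (ne_of_mem_erase hi), add_zero],
    Pi.add_apply, Pi.single_eq_same, ← mul_assoc, natCast_mul_cycleTerm_succ, mul_assoc]

lemma sum_weightedTuples_mul_prod_cycleTerm [CharZero K] (c : ℕ → K) {s v : ℕ} (j : Fin s)
    (hv : v + (j.1 + 1) ≤ s) :
    ∑ r ∈ weightedTuples s (v + (j.1 + 1)),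
        (((j.1 + 1) * r j : ℕ) : K) * ∏ i, cycleTerm c i.1 (r i) =
      c (j.1 + 1) * cycleIndex c s v := by
  have hvs : v ≤ s := by omega
  rw [cycleIndex, mul_sum,
    ← sum_filter_of_ne (p := fun r => r j ≠ 0) fun r _ h hr => h (by simp [hr])]
  refine sum_nbij' (· - Pi.single j 1) (· + Pi.single j 1) ?_ ?_ ?_ ?_ ?_
  · intro r hr
    simp only [mem_filter, mem_weightedTuples hv, mem_weightedTuples hvs] at hr ⊢
    have := weight_add_single (r - Pi.single j 1) j
    rw [sub_single_add_single hr.2, hr.1] at this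
    omega
  · intro r hr
    simp only [mem_filter, mem_weightedTuples hv, mem_weightedTuples hvs] at hr ⊢
    rw [weight_add_single, hr]
    simp
  · intro r hr
    exact sub_single_add_single (mem_filter.1 hr).2
  · intro r _
    exact add_tsub_cancel_right r _
  · intro r hr
    obtain ⟨r, rfl⟩ : ∃ r' : Fin s → ℕ, r = r' + Pi.single j 1 :=
      ⟨_, (sub_single_add_single (mem_filter.1 hr).2).symm⟩
    rw [add_tsub_cancel_right, Pi.add_apply, Pi.single_eq_same,
      natCast_mul_prod_cycleTerm_add_single]

lemma natCast_mul_cycleIndex [CharZero K] (c : ℕ → K) {s u : ℕ} (hu : u ≤ s) :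
    (u : K) * cycleIndex c s u = ∑ d ∈ range u, c (d + 1) * cycleIndex c s (u - (d + 1)) := by
  calc (u : K) * cycleIndex c s u
      = ∑ r ∈ weightedTuples s u, ∑ j : Fin s,
          (((j.1 + 1) * r j : ℕ) : K) * ∏ i, cycleTerm c i.1 (r i) := by
        rw [cycleIndex, mul_sum]
        refine sum_congr rfl fun r hr => ?_
        rw [← sum_mul, ← Nat.cast_sum, (mem_weightedTuples hu).1 hr]
    _ = ∑ j : Fin s, if j.1 < u then c (j.1 + 1) * cycleIndex c s (u - (j.1 + 1)) else 0 := by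
        rw [sum_comm]
        refine sum_congr rfl fun j _ => ?_
        split_ifs with hj
        · obtain ⟨v, rfl⟩ : ∃ v, u = v + (j.1 + 1) := ⟨u - (j.1 + 1), by omega⟩
          rw [Nat.add_sub_cancel, sum_weightedTuples_mul_prod_cycleTerm c j hu]
        · refine sum_eq_zero fun r hr => ?_
          have := mul_le_of_mem_weightedTuples hr j
          have hrj : r j = 0 := by nlinarith
          simp [hrj]
    _ = ∑ d ∈ range s, if d < u then c (d + 1) * cycleIndex c s (u - (d + 1)) else 0 :=
        Fin.sum_univ_eq_sum_range
          (fun d => if d < u then c (d + 1) * cycleIndex c s (u - (d + 1)) else 0) s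
    _ = _ := by
        rw [← sum_range_add_sum_Ico _ hu,
          sum_eq_zero fun d hd => if_neg (not_lt.2 (mem_Ico.1 hd).1), add_zero]
        exact sum_congr rfl fun d hd => if_pos (mem_range.1 hd)

lemma eq_cycleIndex_of_recursion [CharZero K] (c E : ℕ → K) (h0 : E 0 = 1)
    (hrec : ∀ k : ℕ, (k : K) * E k = ∑ d ∈ range k, c (d + 1) * E (k - (d + 1))) {s u : ℕ}
    (hu : u ≤ s) : E u = cycleIndex c s u := by
  induction u using Nat.strong_induction_on with
  | _ u ih =>
    rcases u with _ | k
    · rw [h0, cycleIndex_zero]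
    · refine mul_left_cancel₀ (Nat.cast_ne_zero.2 k.succ_ne_zero : ((k + 1 : ℕ) : K) ≠ 0) ?_
      rw [hrec, natCast_mul_cycleIndex c hu]
      exact sum_congr rfl fun d hd => by rw [ih _ (by omega) (by omega)]

end CycleIndex

lemma sum_powersetCard_prod_neg_eq_cycleIndex {ι K : Type*} [Field K] [CharZero K]
    (S : Finset ι) (x : ι → K) {k s : ℕ} (hk : k ≤ s) :
    ∑ t ∈ S.powersetCard k, ∏ j ∈ t, -x j = cycleIndex (fun d => -∑ j ∈ S, x j ^ d) s k :=
  eq_cycleIndex_of_recursion _ (fun k => ∑ t ∈ S.powersetCard k, ∏ j ∈ t, -x j) (by simp)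
    (mul_sum_powersetCard_prod_neg S x) hk

theorem stmt_19 (n : ℕ) (lam : Fin n → ℂ) (i : Fin n) (z : ℂ)
    (m : ℕ) (hm : m ≤ n - 1) :
    let b : ℕ → ℂ := fun k => ∑ j ∈ Finset.univ.erase i, lam j ^ k
    (∑ s ∈ Finset.powersetCard m (Finset.univ.erase i), ∏ j ∈ s, (z - lam j)) =
      ∑ l ∈ Finset.range (m + 1),
        ((n - 1 - m + l).choose l : ℂ) *
          (∑ r ∈ (Fintype.piFinset fun _ : Fin (m - l) => Finset.range (m - l + 1)).filter
              (fun r => ∑ j, (j.1 + 1) * r j = m - l),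
            ∏ j, (-(b (j.1 + 1))) ^ (r j) /
              (((r j).factorial : ℂ) * ((j.1 + 1 : ℕ) : ℂ) ^ (r j))) * z ^ l := by
  intro b
  have hcard : #(univ.erase i) = n - 1 := by simp
  simp_rw [← neg_add_eq_sub, sum_powersetCard_prod_add_const, hcard]
  rw [← sum_range_reflect]
  refine sum_congr rfl fun l hl => ?_
  have hlm : l ≤ m := Nat.lt_succ_iff.1 (mem_range.1 hl)
  rw [Nat.add_sub_cancel, Nat.sub_sub_self hlm, show n - 1 - (m - l) = n - 1 - m + l by omega,
    sum_powersetCard_prod_neg_eq_cycleIndex _ lam le_rfl]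
  rfl
end
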